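/- Assume in addition that C is braided monoidal. Let d ≥ 0 and let F be a functor in Fct(C, A) that is very strong polynomial of degree exactly d, i.e., F ∈ VPol_d and F ∉ VPol_{d−1}. Then for every object x of C, the translated functor τ_x(F) is very strong polynomial of degree exactly d: τ_x(F) ∈ VPol_d and τ_x(F) ∉ VPol_{d−1}. -/

import Mathlib

open CategoryTheory CategoryTheory.Limits CategoryTheory.MonoidalCategory

variable {C : Type*} [Category C] [MonoidalCategory C]
variable {A : Type*} [Category A] [Abelian A]

/-- The translation endofunctor `τ_x` of `Fct(C, A)`: precomposition with `x ⊗ -`. -/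
noncomputable def tauF (A : Type*) [Category A] (x : C) : (C ⥤ A) ⥤ (C ⥤ A) :=
  (Functor.whiskeringLeft C C A).obj (tensorLeft x)

/-- The component `i_x(F) : F ⟶ τ_x F`, whose component at `c` is
`F` applied to `c ≅ 𝟙 ⊗ c ⟶ x ⊗ c`. -/
def iApp (hI : IsInitial (𝟙_ C)) (x : C) (F : C ⥤ A) : F ⟶ tensorLeft x ⋙ F where
  app c := F.map ((λ_ c).inv ≫ hI.to x ▷ c)
  naturality c c' f := by
    dsimp
    rw [← F.map_comp, ← F.map_comp]
    congr 1
    rw [leftUnitor_inv_naturality_assoc, whisker_exchange, Category.assoc]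

/-- The natural transformation `i_x : Id ⟶ τ_x` of endofunctors of `Fct(C, A)`. -/
noncomputable def iNT (hI : IsInitial (𝟙_ C)) (x : C) :
    𝟭 (C ⥤ A) ⟶ tauF A x where
  app F := iApp hI x F
  naturality F G η := by
    ext c
    exact (η.naturality _).symm

/-- The evanescence endofunctor `κ_x = ker(i_x)` of `Fct(C, A)`. -/
noncomputable def kappaF (hI : IsInitial (𝟙_ C)) (x : C) : (C ⥤ A) ⥤ (C ⥤ A) :=
  kernel (iNT (A := A) hI x)

/-- The difference endofunctor `δ_x = coker(i_x)` of `Fct(C, A)`. -/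
noncomputable def deltaF (hI : IsInitial (𝟙_ C)) (x : C) : (C ⥤ A) ⥤ (C ⥤ A) :=
  cokernel (iNT (A := A) hI x)

/-- `VPolAux hI (n+1) F` says that `F` is very strong polynomial of degree `≤ n`;
`VPolAux hI 0 F` says that `F` is the zero functor (degree `≤ -1`). -/
def VPolAux (hI : IsInitial (𝟙_ C)) : ℕ → (C ⥤ A) → Prop
  | 0 => fun F => IsZero F
  | n + 1 => fun F => ∀ x : C,
      IsZero ((kappaF hI x).obj F) ∧ VPolAux hI n ((deltaF hI x).obj F)

/-- `VPol hI n F` : `F` is very strong polynomial of degree `≤ n`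
(with `VPol_m = {0}` for `m < 0`). -/
def VPol (hI : IsInitial (𝟙_ C)) (n : ℤ) (F : C ⥤ A) : Prop :=
  VPolAux hI (n + 1).toNat F

/-!
The braiding gives `τ_y τ_x F ≅ τ_x τ_y F`, compatibly with `i_y`, and `τ_x` is exact, so
`τ_x` commutes with `κ_y` and `δ_y`; by induction on `n`, `τ_x` preserves `VPol_n`.
Conversely, if `F ∈ VPol_n` and `τ_x F ∈ VPol_{n-1}` then `F ∈ VPol_{n-1}`: induction through
`δ_y` reduces this to `n = 0`, where `τ_x F = 0` forces `i_x(F) = 0`, so `F = κ_x F = 0`.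
-/

section Translation

variable (hI : IsInitial (𝟙_ C))

noncomputable def kappaFObjIso (y : C) (F : C ⥤ A) :
    (kappaF hI y).obj F ≅ kernel (iApp hI y F) :=
  PreservesKernel.iso ((evaluation (C ⥤ A) (C ⥤ A)).obj F) (iNT (A := A) hI y)

noncomputable def deltaFObjIso (y : C) (F : C ⥤ A) :
    (deltaF hI y).obj F ≅ cokernel (iApp hI y F) :=
  PreservesCokernel.iso ((evaluation (C ⥤ A) (C ⥤ A)).obj F) (iNT (A := A) hI y)

variable [BraidedCategory C]

/-- `τ_y τ_x F ≅ τ_x τ_y F`, induced by the braiding `x ⊗ y ≅ y ⊗ x`. -/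
noncomputable def tauCommIso (x y : C) (F : C ⥤ A) :
    tensorLeft y ⋙ (tauF A x).obj F ≅ (tauF A x).obj (tensorLeft y ⋙ F) :=
  NatIso.ofComponents
    (fun c => F.mapIso ((α_ x y c).symm ≪≫ whiskerRightIso (β_ x y) c ≪≫ α_ y x c))
    (fun {c c'} f => by
      dsimp [tauF]
      rw [← F.map_comp, ← F.map_comp]
      congr 1
      rw [whiskerRightIso_hom, whiskerRightIso_hom,
        associator_inv_naturality_right_assoc, whisker_exchange_assoc,
        associator_naturality_right]
      simp)

omit [Abelian A] in
/-- The braiding of `x` with the unit is the swap of unitors, so it carries `𝟙 → y` to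
`𝟙 → y`. -/
lemma tauF_map_iApp (x y : C) (F : C ⥤ A) :
    (tauF A x).map (iApp hI y F) = iApp hI y ((tauF A x).obj F) ≫ (tauCommIso x y F).hom := by
  ext c
  dsimp [tauF, iApp, tauCommIso]
  change F.map _ = F.map _ ≫ F.map ((α_ x y c).inv ≫ (β_ x y).hom ▷ c ≫ (α_ y x c).hom)
  rw [← F.map_comp]
  congr 1
  rw [MonoidalCategory.whiskerLeft_comp, Category.assoc,
    associator_inv_naturality_middle_assoc, ← comp_whiskerRight_assoc,
    BraidedCategory.braiding_naturality_right, braiding_tensorUnit_right]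
  simp

noncomputable def tauKappaIso (x y : C) (F : C ⥤ A) :
    (tauF A x).obj ((kappaF hI y).obj F) ≅ (kappaF hI y).obj ((tauF A x).obj F) :=
  (tauF A x).mapIso (kappaFObjIso hI y F) ≪≫
    PreservesKernel.iso ((Functor.whiskeringLeft C C A).obj (tensorLeft x)) (iApp hI y F) ≪≫
    kernelIsoOfEq (tauF_map_iApp hI x y F) ≪≫
    kernelCompMono (iApp hI y ((tauF A x).obj F)) (tauCommIso x y F).hom ≪≫
    (kappaFObjIso hI y ((tauF A x).obj F)).symm

noncomputable def tauDeltaIso (x y : C) (F : C ⥤ A) :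
    (tauF A x).obj ((deltaF hI y).obj F) ≅ (deltaF hI y).obj ((tauF A x).obj F) :=
  (tauF A x).mapIso (deltaFObjIso hI y F) ≪≫
    PreservesCokernel.iso ((Functor.whiskeringLeft C C A).obj (tensorLeft x)) (iApp hI y F) ≪≫
    cokernelIsoOfEq (tauF_map_iApp hI x y F) ≪≫
    cokernelCompIsIso (iApp hI y ((tauF A x).obj F)) (tauCommIso x y F).hom ≪≫
    (deltaFObjIso hI y ((tauF A x).obj F)).symm

end Translation

lemma isZero_tauF_obj (x : C) {F : C ⥤ A} (h : IsZero F) : IsZero ((tauF A x).obj F) :=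
  Functor.isZero _ fun c => (F.isZero_iff.mp h) (x ⊗ c)

namespace VPolAux

variable {hI : IsInitial (𝟙_ C)}

lemma of_iso : ∀ {n : ℕ} {F G : C ⥤ A}, (F ≅ G) → VPolAux hI n F → VPolAux hI n G
  | 0, _, _, e, h => IsZero.of_iso h e.symm
  | _ + 1, _, _, e, h => fun x =>
      ⟨(h x).1.of_iso ((kappaF hI x).mapIso e).symm, of_iso ((deltaF hI x).mapIso e) (h x).2⟩

variable [BraidedCategory C]

lemma tau (x : C) : ∀ {n : ℕ} {F : C ⥤ A}, VPolAux hI n F → VPolAux hI n ((tauF A x).obj F)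
  | 0, _, h => isZero_tauF_obj x h
  | _ + 1, F, h => fun y =>
      ⟨(isZero_tauF_obj x (h y).1).of_iso (tauKappaIso hI x y F).symm,
       of_iso (tauDeltaIso hI x y F) (tau x (h y).2)⟩

lemma of_tau (x : C) : ∀ {n : ℕ} {F : C ⥤ A}, VPolAux hI (n + 1) F →
    VPolAux hI n ((tauF A x).obj F) → VPolAux hI n F
  | 0, F, hF, hτ => by
      have hi : iApp hI x F = 0 := (show IsZero ((tauF A x).obj F) from hτ).eq_of_tgt _ _
      exact (hF x).1.of_iso
        (kappaFObjIso hI x F ≪≫ kernelIsoOfEq hi ≪≫ kernelZeroIsoSource).symm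
  | _ + 1, F, hF, hτ => fun y =>
      ⟨(hF y).1, of_tau x (hF y).2 (of_iso (tauDeltaIso hI x y F).symm (hτ y).2)⟩

end VPolAux

lemma vpol_natCast_iff (hI : IsInitial (𝟙_ C)) (n : ℕ) (F : C ⥤ A) :
    VPol hI n F ↔ VPolAux hI (n + 1) F := by
  rw [VPol, show ((n : ℤ) + 1).toNat = n + 1 by omega]

lemma vpol_natCast_sub_one_iff (hI : IsInitial (𝟙_ C)) (n : ℕ) (F : C ⥤ A) :
    VPol hI ((n : ℤ) - 1) F ↔ VPolAux hI n F := by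
  rw [VPol, show ((n : ℤ) - 1 + 1).toNat = n by omega]

/-- Translation preserves the exact very strong polynomial degree. -/
theorem tau_preserves_vpol_degree [BraidedCategory C] (hI : IsInitial (𝟙_ C))
    (d : ℕ) (F : C ⥤ A) (h₁ : VPol hI d F) (h₂ : ¬ VPol hI ((d : ℤ) - 1) F) (x : C) :
    VPol hI d ((tauF A x).obj F) ∧ ¬ VPol hI ((d : ℤ) - 1) ((tauF A x).obj F) := by
  rw [vpol_natCast_iff] at h₁ ⊢
  rw [vpol_natCast_sub_one_iff] at h₂ ⊢
  exact ⟨h₁.tau x, fun hτ => h₂ (h₁.of_tau x hτ)⟩
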